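/- arXiv:1508.04106 — 2 statements merged into one kernel-verified Lean document; each statement's English description precedes it below -/
import Mathlib

section
/- Let x₀ ∈ ℝ² and let r : ℝ → ℝ be continuous and 2π-periodic. Then the set {x ∈ ℝ² : |x − x₀| = r(h(x − x₀))} has two-dimensional Lebesgue measure zero. -/
open MeasureTheory

/-- The angular polar coordinate of a point in the plane (the argument of the
corresponding complex number, taking values in `(-π, π]`). -/
noncomputable def polarAngle (x : EuclideanSpace ℝ (Fin 2)) : ℝ :=
  Complex.arg ⟨x 0, x 1⟩

/-!
In polar coordinates `(ρ, θ)` the curve becomes the graph `ρ = r θ` of a measurable function,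
which is null by Fubini. The smooth map `polarCoord.symm` sends null sets to null sets, and
the part of the curve outside the source of `polarCoord` lies on a half-line.
-/

open Set Complex

theorem MeasureTheory.Measure.prod_setOf_fst_eq_eq_zero {α β : Type*} [MeasurableSpace α]
    [MeasurableSpace β] [MeasurableEq α] (μ : Measure α) [NullSingletonClass μ] [SFinite μ]
    (ν : Measure β) [SFinite ν] {f : β → α} (hf : Measurable f) :
    μ.prod ν {p | p.1 = f p.2} = 0 := by
  have hgraph : MeasurableSet {p : α × β | p.1 = f p.2} :=
    measurableSet_eq_fun measurable_fst (hf.comp measurable_snd)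
  rw [Measure.prod_apply_symm hgraph]
  simp [Set.preimage, measure_singleton]

theorem Complex.volume_setOf_norm_eq_comp_arg {r : ℝ → ℝ} (hr : Measurable r) :
    volume {z : ℂ | ‖z‖ = r (arg z)} = 0 := by
  set N : Set (ℝ × ℝ) := {p | p.1 = r p.2}
  have hN : volume N = 0 := Measure.prod_setOf_fst_eq_eq_zero volume volume hr
  have himage : volume (polarCoord.symm '' N) = 0 :=
    addHaar_image_eq_zero_of_differentiableOn_of_addHaar_eq_zero volume
      (fun p _ ↦ (hasFDerivAt_polarCoord_symm p).differentiableAt.differentiableWithinAt) hN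
  have hsource : volume polarCoord.sourceᶜ = 0 := ae_eq_univ.mp polarCoord_source_ae_eq_univ
  have hsub : {z : ℂ | ‖z‖ = r (arg z)} ⊆
      measurableEquivRealProd ⁻¹' (polarCoord.symm '' N ∪ polarCoord.sourceᶜ) := by
    intro z hz
    by_cases hzs : (z.re, z.im) ∈ polarCoord.source
    · refine Or.inl ⟨Complex.polarCoord z, ?_, polarCoord.left_inv hzs⟩
      simpa [N, Complex.polarCoord_apply] using hz
    · exact Or.inr hzs
  refine measure_mono_null hsub ?_
  rw [volume_preserving_equiv_real_prod.measure_preimage_equiv]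
  exact measure_union_null himage hsource

theorem polarAngle_eq_arg (x : EuclideanSpace ℝ (Fin 2)) :
    polarAngle x = arg (orthonormalBasisOneI.repr.symm x) := by
  rw [polarAngle, orthonormalBasisOneI_repr_symm_apply]
  congr 1
  apply Complex.ext <;> simp

theorem stmt2_general (x₀ : EuclideanSpace ℝ (Fin 2))
    (r : ℝ → ℝ) (hr : Continuous r) :
    volume {x : EuclideanSpace ℝ (Fin 2) | ‖x - x₀‖ = r (polarAngle (x - x₀))} = 0 := by
  have hcurve : {x : EuclideanSpace ℝ (Fin 2) | ‖x - x₀‖ = r (polarAngle (x - x₀))} =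
      (· + -x₀) ⁻¹' (orthonormalBasisOneI.measurableEquiv.symm ⁻¹'
        {z : ℂ | ‖z‖ = r (arg z)}) := by
    ext x
    change _ ↔ ‖orthonormalBasisOneI.repr.symm (x + -x₀)‖ =
      r (arg (orthonormalBasisOneI.repr.symm (x + -x₀)))
    rw [LinearIsometryEquiv.norm_map, ← polarAngle_eq_arg, ← sub_eq_add_neg]
    rfl
  rw [hcurve, measure_preimage_add_right,
    orthonormalBasisOneI.measurePreserving_measurableEquiv.symm.measure_preimage_equiv]
  exact volume_setOf_norm_eq_comp_arg hr.measurable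

theorem stmt2 (x₀ : EuclideanSpace ℝ (Fin 2))
    (r : ℝ → ℝ) (hr : Continuous r) (hrper : Function.Periodic r (2 * Real.pi)) :
    volume {x : EuclideanSpace ℝ (Fin 2) | ‖x - x₀‖ = r (polarAngle (x - x₀))} = 0 :=
  stmt2_general x₀ r hr
end

section
/- Let D ⊆ ℝ² be a bounded open set, let u₊, u₋ > 0, let r : ℝ → ℝ be 2π-periodic and Lipschitz continuous, let x₀ ∈ D, and let (x₀^k)_{k≥1} ⊆ D be a sequence of points with |x₀^k − x₀| → 0 as k → ∞. Then F₂(r, x₀^k) converges to F₂(r, x₀) in Lebesgue measure on D, i.e. for every δ > 0 the Lebesgue measure of {x ∈ D : |F₂(r, x₀^k)(x) − F₂(r, x₀)(x)| > δ} tends to 0 as k → ∞. -/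
open MeasureTheory Filter

/-- The star-shaped inclusion `A(r, x₀) = {x ∈ D : |x − x₀| ≤ r(h(x − x₀))}`. -/
def starSet (D : Set (EuclideanSpace ℝ (Fin 2))) (r : ℝ → ℝ)
    (x₀ : EuclideanSpace ℝ (Fin 2)) : Set (EuclideanSpace ℝ (Fin 2)) :=
  {x | x ∈ D ∧ ‖x - x₀‖ ≤ r (polarAngle (x - x₀))}

/-- The star-shaped conductivity `F₂(r, x₀) = (u₊ − u₋)·𝟙_{A(r,x₀)} + u₋`. -/
noncomputable def starF (D : Set (EuclideanSpace ℝ (Fin 2))) (uplus uminus : ℝ)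
    (r : ℝ → ℝ) (x₀ : EuclideanSpace ℝ (Fin 2)) (x : EuclideanSpace ℝ (Fin 2)) : ℝ :=
  (uplus - uminus) * (starSet D r x₀).indicator (fun _ => (1 : ℝ)) x + uminus

open scoped symmDiff Topology ENNReal

/-!
The conductivities `F₂(r, c)` for two centres differ only on the symmetric difference of the
translates `c + S` of the star body `S = {y | ‖y‖ ≤ r (h y)}`. Since `r` is continuous, `S` is
measurable and bounded, and translation is continuous in measure on sets of finite measure,
so the measure of that symmetric difference tends to `0` as the centres converge.
-/

theorem tendsto_measure_symmDiff_preimage_sub_right {G α : Type*} [AddGroup G]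
    [TopologicalSpace G] [IsTopologicalAddGroup G] [MeasurableSpace G] [BorelSpace G]
    {μ : Measure G} [μ.IsAddRightInvariant] [μ.InnerRegularCompactLTTop]
    [IsLocallyFiniteMeasure μ] {l : Filter α} {a : α → G} {b : G} (hab : Tendsto a l (𝓝 b))
    {s : Set G} (hs : NullMeasurableSet s μ) (hμs : μ s ≠ ∞) :
    Tendsto (fun i ↦ μ (((fun x ↦ x - a i) ⁻¹' s) ∆ ((fun x ↦ x - b) ⁻¹' s))) l (𝓝 0) := by
  have hτ : Continuous fun c : G ↦ (⟨fun x ↦ x - c, by fun_prop⟩ : C(G, G)) := by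
    apply ContinuousMap.continuous_of_continuous_uncurry
    exact continuous_snd.sub continuous_fst
  exact tendsto_measure_symmDiff_preimage_nhds_zero (μ := μ) (ν := μ)
    (f := fun i ↦ ⟨fun x ↦ x - a i, by fun_prop⟩) (g := ⟨fun x ↦ x - b, by fun_prop⟩)
    ((hτ.tendsto b).comp hab)
    (.of_forall fun i ↦ measurePreserving_sub_right μ (a i)) (measurePreserving_sub_right μ b)
    hs hμs

lemma measurable_polarAngle : Measurable polarAngle :=
  Complex.measurable_arg.comp (Complex.measurableEquivRealProd.symm.measurable.comp
    (by fun_prop : Measurable fun x : EuclideanSpace ℝ (Fin 2) ↦ (x 0, x 1)))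

lemma polarAngle_mem_Icc (x : EuclideanSpace ℝ (Fin 2)) :
    polarAngle x ∈ Set.Icc (-Real.pi) Real.pi :=
  ⟨(Complex.neg_pi_lt_arg _).le, Complex.arg_le_pi _⟩

/-- The star-shaped set `A(r, 0)` of the whole plane; `A(r, x₀) = D ∩ (x₀ + starBody r)`. -/
def starBody (r : ℝ → ℝ) : Set (EuclideanSpace ℝ (Fin 2)) :=
  {y | ‖y‖ ≤ r (polarAngle y)}

section StarBody

variable {r : ℝ → ℝ}

lemma measurableSet_starBody (hr : Measurable r) : MeasurableSet (starBody r) :=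
  measurableSet_le measurable_norm (hr.comp measurable_polarAngle)

lemma isBounded_starBody (hr : Continuous r) : Bornology.IsBounded (starBody r) := by
  obtain ⟨M, hM⟩ := (isCompact_Icc (a := -Real.pi) (b := Real.pi)).bddAbove_image hr.continuousOn
  refine (Metric.isBounded_closedBall (x := 0) (r := M)).subset fun y hy ↦ ?_
  rw [mem_closedBall_zero_iff]
  exact hy.trans (hM ⟨polarAngle y, polarAngle_mem_Icc y, rfl⟩)

lemma starF_eq_of_mem_starBody_iff {D : Set (EuclideanSpace ℝ (Fin 2))} {uplus uminus : ℝ}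
    {a b x : EuclideanSpace ℝ (Fin 2)} (h : x - a ∈ starBody r ↔ x - b ∈ starBody r) :
    starF D uplus uminus r a x = starF D uplus uminus r b x := by
  have hmem : x ∈ starSet D r a ↔ x ∈ starSet D r b := and_congr_right' h
  by_cases ha : x ∈ starSet D r a
  · rw [starF, starF, Set.indicator_of_mem ha, Set.indicator_of_mem (hmem.mp ha)]
  · rw [starF, starF, Set.indicator_of_notMem ha, Set.indicator_of_notMem (mt hmem.mpr ha)]

end StarBody

theorem stmt4_general (D : Set (EuclideanSpace ℝ (Fin 2))) (uplus uminus : ℝ) (r : ℝ → ℝ)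
    (K : NNReal) (hrlip : LipschitzWith K r) (x₀ : EuclideanSpace ℝ (Fin 2))
    (x₀k : ℕ → EuclideanSpace ℝ (Fin 2)) (hconv : Tendsto x₀k atTop (nhds x₀)) :
    ∀ δ > (0 : ℝ),
      Tendsto
        (fun k => volume {x | x ∈ D ∧
          δ < |starF D uplus uminus r (x₀k k) x - starF D uplus uminus r x₀ x|})
        atTop (nhds 0) := by
  intro δ hδ
  have hr : Continuous r := hrlip.continuous
  have hsymmDiff := tendsto_measure_symmDiff_preimage_sub_right (μ := volume) hconv
    (measurableSet_starBody hr.measurable).nullMeasurableSet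
    (isBounded_starBody hr).measure_lt_top.ne
  refine tendsto_of_tendsto_of_tendsto_of_le_of_le tendsto_const_nhds hsymmDiff
    (fun _ ↦ bot_le) fun k ↦ measure_mono ?_
  rintro x ⟨-, hδx⟩
  by_contra hx
  rw [starF_eq_of_mem_starBody_iff ((not_xor _ _).mp hx), sub_self, abs_zero] at hδx
  exact hδx.not_gt hδ

theorem stmt4 (D : Set (EuclideanSpace ℝ (Fin 2))) (hDopen : IsOpen D)
    (hDbdd : Bornology.IsBounded D)
    (uplus uminus : ℝ) (huplus : 0 < uplus) (huminus : 0 < uminus)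
    (r : ℝ → ℝ) (hrper : Function.Periodic r (2 * Real.pi))
    (K : NNReal) (hrlip : LipschitzWith K r)
    (x₀ : EuclideanSpace ℝ (Fin 2)) (hx₀ : x₀ ∈ D)
    (x₀k : ℕ → EuclideanSpace ℝ (Fin 2)) (hx₀k : ∀ k, x₀k k ∈ D)
    (hconv : Tendsto x₀k atTop (nhds x₀)) :
    ∀ δ > (0 : ℝ),
      Tendsto
        (fun k => volume {x | x ∈ D ∧
          δ < |starF D uplus uminus r (x₀k k) x - starF D uplus uminus r x₀ x|})
        atTop (nhds 0) :=
  stmt4_general D uplus uminus r K hrlip x₀ x₀k hconv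
end
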